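/- In the k-to-k setup with n ≥ 2 and p > 0, if kp > min(λ₂(Q₁), λ₂(Q₂)), then the second-smallest eigenvalue of the supra-Laplacian satisfies λ₂(Q) < 2kp; in other words, above the coupling value p* = min(λ₂(Q₁), λ₂(Q₂))/k the eigenvalue 2kp is no longer the algebraic connectivity of Q (upper bound for the structural transition threshold). -/

import Mathlib

open Matrix

/-- The eigenvalues of a Hermitian matrix, sorted in increasing order (as a list). -/
noncomputable def sortedEigs {ι : Type*} [Fintype ι] [DecidableEq ι]
    {A : Matrix ι ι ℝ} (hA : A.IsHermitian) : List ℝ :=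
  Multiset.sort (Finset.univ.val.map hA.eigenvalues) (· ≤ ·)

set_option linter.unusedSectionVars false
set_option maxHeartbeats 1000000

lemma get1_cons_cons (a b : ℝ) (t : List ℝ) : (a :: b :: t)[1]! = b := by
  rw [List.getElem!_cons_succ, List.getElem!_cons_zero]

lemma sorted_get1_lt {μ : ℝ} (l : List ℝ) (hs : l.Pairwise (· ≤ ·))
    (h : 2 ≤ l.countP (fun x => decide (x < μ))) : l[1]! < μ := by
  match l, hs with
  | [], _ => rw [List.countP_nil] at h; omega
  | [a], _ => rw [List.countP_cons, List.countP_nil] at h; split_ifs at h <;> omega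
  | a :: b :: t, hs =>
    rw [get1_cons_cons]
    by_contra hb
    push_neg at hb
    have hbt : ∀ x ∈ b :: t, ¬ (x < μ) := by
      intro x hx
      rcases List.mem_cons.1 hx with rfl | hx
      · exact not_lt.2 hb
      · have := (List.pairwise_cons.1 (List.pairwise_cons.1 hs).2).1 x hx
        push_neg; linarith
    have h0 : (b :: t).countP (fun x => decide (x < μ)) = 0 :=
      List.countP_eq_zero.2 (by intro x hx; simpa using hbt x hx)
    rw [List.countP_cons, h0] at h
    split_ifs at h <;> omega

lemma sorted_two_le_countP (l : List ℝ) (hs : l.Pairwise (· ≤ ·)) (hl : 2 ≤ l.length) :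
    2 ≤ l.countP (fun x => decide (x ≤ l[1]!)) := by
  match l, hs, hl with
  | a :: b :: t, hs, _ =>
    have hab : a ≤ b := (List.pairwise_cons.1 hs).1 b (by simp)
    rw [get1_cons_cons, List.countP_cons, List.countP_cons]
    simp [hab]

variable {ι κ : Type*} [Fintype ι] [Fintype κ] [DecidableEq ι] {A : Matrix ι ι ℝ}

lemma countP_sortedEigs (hA : A.IsHermitian) (p : ℝ → Prop) [DecidablePred p] :
    (sortedEigs hA).countP (fun x => decide (p x))
      = (Finset.univ.filter (fun i => p (hA.eigenvalues i))).card := by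
  rw [sortedEigs, ← Multiset.coe_countP, Multiset.sort_eq, Multiset.countP_map]
  rfl

lemma length_sortedEigs (hA : A.IsHermitian) : (sortedEigs hA).length = Fintype.card ι := by
  rw [sortedEigs, Multiset.length_sort, Multiset.card_map]
  rfl

lemma sortedEigs_sorted (hA : A.IsHermitian) : (sortedEigs hA).Pairwise (· ≤ ·) :=
  Multiset.pairwise_sort _ _

lemma sortedEigs_get1_lt (hA : A.IsHermitian) {μ : ℝ} {i j : ι} (hij : i ≠ j)
    (hi : hA.eigenvalues i < μ) (hj : hA.eigenvalues j < μ) : (sortedEigs hA)[1]! < μ := by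
  apply sorted_get1_lt _ (sortedEigs_sorted hA)
  rw [countP_sortedEigs hA (fun x => x < μ)]
  have : 1 < (Finset.univ.filter (fun i => hA.eigenvalues i < μ)).card :=
    Finset.one_lt_card.2 ⟨i, by simp [hi], j, by simp [hj], hij⟩
  omega

lemma sortedEigs_exists_two (hA : A.IsHermitian) (h2 : 2 ≤ Fintype.card ι) :
    ∃ i j : ι, i ≠ j ∧ hA.eigenvalues i ≤ (sortedEigs hA)[1]!
      ∧ hA.eigenvalues j ≤ (sortedEigs hA)[1]! := by
  have hlen : 2 ≤ (sortedEigs hA).length := by rw [length_sortedEigs]; exact h2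
  have hc := sorted_two_le_countP _ (sortedEigs_sorted hA) hlen
  rw [countP_sortedEigs hA (fun x => x ≤ (sortedEigs hA)[1]!)] at hc
  have hcard : 1 < (Finset.univ.filter
      (fun i => hA.eigenvalues i ≤ (sortedEigs hA)[1]!)).card := by omega
  obtain ⟨a, ha, b, hb, hab⟩ := Finset.one_lt_card.1 hcard
  simp only [Finset.mem_filter] at ha hb
  exact ⟨a, b, hab, ha.2, hb.2⟩
lemma dot_sum (v : ι → ℝ) (f : κ → ι → ℝ) : v ⬝ᵥ (∑ k, f k) = ∑ k, v ⬝ᵥ f k := by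
  simp only [dotProduct, Finset.sum_apply, Finset.mul_sum]
  rw [Finset.sum_comm]

lemma mulVec_sum' (f : κ → ι → ℝ) : A *ᵥ (∑ k, f k) = ∑ k, A *ᵥ f k := by
  have h := map_sum (Matrix.mulVecLin A) f Finset.univ
  simp only [Matrix.mulVecLin_apply] at h
  exact h

lemma hermitian_dot (hA : A.IsHermitian) (v w : ι → ℝ) :
    v ⬝ᵥ (A *ᵥ w) = (A *ᵥ v) ⬝ᵥ w := by
  rw [dotProduct_mulVec, ← Matrix.mulVec_transpose]
  have : Aᵀ = A := by
    rw [← A.conjTranspose_eq_transpose_of_trivial]; exact hA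
  rw [this]

lemma sum_repr (hA : A.IsHermitian) (x : ι → ℝ) :
    ∑ i, ((⇑(hA.eigenvectorBasis i) : ι → ℝ) ⬝ᵥ x) • (⇑(hA.eigenvectorBasis i) : ι → ℝ) = x := by
  have h := hA.eigenvectorBasis.sum_repr' ((WithLp.equiv 2 (ι → ℝ)).symm x)
  have h' := congrArg (WithLp.linearEquiv 2 ℝ (ι → ℝ)) h
  rw [map_sum] at h'
  simpa [PiLp.inner_apply, RCLike.inner_apply, dotProduct, mul_comm] using h'

lemma dot_orthonormal (hA : A.IsHermitian) (i j : ι) :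
    (⇑(hA.eigenvectorBasis i) : ι → ℝ) ⬝ᵥ (⇑(hA.eigenvectorBasis j) : ι → ℝ)
      = if i = j then 1 else 0 := by
  have h := hA.eigenvectorBasis.orthonormal
  rw [orthonormal_iff_ite] at h
  simpa [PiLp.inner_apply, RCLike.inner_apply, dotProduct, mul_comm] using h i j

lemma norm_expansion (hA : A.IsHermitian) (x : ι → ℝ) :
    x ⬝ᵥ x = ∑ i, ((⇑(hA.eigenvectorBasis i) : ι → ℝ) ⬝ᵥ x)^2 := by
  nth_rewrite 2 [← sum_repr hA x]
  rw [dot_sum]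
  refine Finset.sum_congr rfl fun i _ => ?_
  rw [dotProduct_smul]
  rw [dotProduct_comm]
  ring_nf

lemma quadform_expansion (hA : A.IsHermitian) (x : ι → ℝ) :
    x ⬝ᵥ (A *ᵥ x) = ∑ i, hA.eigenvalues i * ((⇑(hA.eigenvectorBasis i) : ι → ℝ) ⬝ᵥ x)^2 := by
  nth_rewrite 2 [← sum_repr hA x]
  rw [mulVec_sum', dot_sum]
  refine Finset.sum_congr rfl fun i _ => ?_
  rw [Matrix.mulVec_smul, hA.mulVec_eigenvectorBasis]
  rw [smul_smul, dotProduct_smul, dotProduct_comm]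
  rw [smul_eq_mul, sq]
  ring

lemma dot_self_nonneg (v : ι → ℝ) : 0 ≤ v ⬝ᵥ v :=
  Finset.sum_nonneg fun i _ => mul_self_nonneg _

lemma core (hA : A.IsHermitian) {x₁ x₂ : ι → ℝ} (h₁ : x₁ ≠ 0)
    (hK : A *ᵥ x₁ = 0) (horth : x₁ ⬝ᵥ x₂ = 0) {μ : ℝ} (hμ : 0 < μ)
    (hray : x₂ ⬝ᵥ (A *ᵥ x₂) < μ * (x₂ ⬝ᵥ x₂)) :
    (sortedEigs hA)[1]! < μ := by
  by_contra hcon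
  push_neg at hcon
  have hone : ∀ i j, hA.eigenvalues i < μ → hA.eigenvalues j < μ → i = j := by
    intro i j hi hj
    by_contra hij
    exact absurd (sortedEigs_get1_lt hA hij hi hj) (not_lt.2 hcon)
  set V : ι → ι → ℝ := fun i => ⇑(hA.eigenvectorBasis i) with hV
  have hex : ∃ j₀, V j₀ ⬝ᵥ x₁ ≠ 0 := by
    by_contra h; push_neg at h
    apply h₁
    rw [← sum_repr hA x₁]
    exact Finset.sum_eq_zero fun i _ => by rw [show (⇑(hA.eigenvectorBasis i) : ι → ℝ) ⬝ᵥ x₁ = 0 from h i, zero_smul]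
  obtain ⟨j₀, hj₀⟩ := hex
  have hlam0 : hA.eigenvalues j₀ = 0 := by
    have h1 : V j₀ ⬝ᵥ (A *ᵥ x₁) = 0 := by rw [hK, dotProduct_zero]
    rw [hV, hermitian_dot hA, hA.mulVec_eigenvectorBasis, smul_dotProduct] at h1
    rcases (show hA.eigenvalues j₀ = 0 ∨ V j₀ ⬝ᵥ x₁ = 0 by simpa using h1) with h | h
    · exact h
    · exact absurd h hj₀
  have hge : ∀ i, i ≠ j₀ → μ ≤ hA.eigenvalues i := by
    intro i hi
    by_contra hlt; push_neg at hlt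
    exact hi (hone i j₀ hlt (by rw [hlam0]; exact hμ))
  set a : ℝ := -(V j₀ ⬝ᵥ x₂) with ha
  set b : ℝ := V j₀ ⬝ᵥ x₁ with hb
  set y : ι → ℝ := a • x₁ + b • x₂ with hy
  have hcy : V j₀ ⬝ᵥ y = 0 := by
    rw [hy, dotProduct_add, dotProduct_smul, dotProduct_smul, smul_eq_mul, smul_eq_mul, ha]
    ring
  have hlow : μ * (y ⬝ᵥ y) ≤ y ⬝ᵥ (A *ᵥ y) := by
    rw [quadform_expansion hA y, norm_expansion hA y, Finset.mul_sum]
    refine Finset.sum_le_sum fun i _ => ?_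
    by_cases hij : i = j₀
    · subst hij
      rw [show (⇑(hA.eigenvectorBasis i) : ι → ℝ) ⬝ᵥ y = 0 from hcy]
      simp
    · have h := hge i hij
      have h2 := sq_nonneg ((⇑(hA.eigenvectorBasis i) : ι → ℝ) ⬝ᵥ y)
      nlinarith
  have hAy : A *ᵥ y = b • (A *ᵥ x₂) := by
    rw [hy, Matrix.mulVec_add, Matrix.mulVec_smul, Matrix.mulVec_smul, hK, smul_zero, zero_add]
  have h1 : y ⬝ᵥ (A *ᵥ y) = b^2 * (x₂ ⬝ᵥ (A *ᵥ x₂)) := by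
    have hcross : x₁ ⬝ᵥ (A *ᵥ x₂) = 0 := by rw [hermitian_dot hA, hK, zero_dotProduct]
    rw [hAy, hy, add_dotProduct, smul_dotProduct, smul_dotProduct,
      dotProduct_smul, dotProduct_smul, hcross]
    simp only [smul_eq_mul]
    ring
  have h2 : y ⬝ᵥ y = a^2 * (x₁ ⬝ᵥ x₁) + b^2 * (x₂ ⬝ᵥ x₂) := by
    have h21 : x₂ ⬝ᵥ x₁ = 0 := by rw [dotProduct_comm]; exact horth
    simp only [hy, add_dotProduct, dotProduct_add, smul_dotProduct, dotProduct_smul,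
      horth, h21, smul_eq_mul, mul_zero, add_zero, zero_add]
    ring
  have hb2 : 0 < b^2 := by positivity
  have hx1n : 0 ≤ x₁ ⬝ᵥ x₁ := dot_self_nonneg x₁
  have key := mul_lt_mul_of_pos_left hray hb2
  have nn : 0 ≤ μ * (a^2 * (x₁ ⬝ᵥ x₁)) := by positivity
  rw [h1, h2] at hlow
  nlinarith [hlow, key, nn]

lemma existsV (hA : A.IsHermitian) (h2 : 2 ≤ Fintype.card ι) (u : ι → ℝ) :
    ∃ v : ι → ℝ, v ≠ 0 ∧ u ⬝ᵥ v = 0 ∧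
      v ⬝ᵥ (A *ᵥ v) ≤ (sortedEigs hA)[1]! * (v ⬝ᵥ v) := by
  obtain ⟨i₀, i₁, hne, h0, h1⟩ := sortedEigs_exists_two hA h2
  set c := (sortedEigs hA)[1]! with hc
  set w₀ : ι → ℝ := ⇑(hA.eigenvectorBasis i₀) with hw0
  set w₁ : ι → ℝ := ⇑(hA.eigenvectorBasis i₁) with hw1
  have hw00 : w₀ ⬝ᵥ w₀ = 1 := by simpa using dot_orthonormal hA i₀ i₀
  have hw11 : w₁ ⬝ᵥ w₁ = 1 := by simpa using dot_orthonormal hA i₁ i₁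
  have hw01 : w₀ ⬝ᵥ w₁ = 0 := by simpa [hne] using dot_orthonormal hA i₀ i₁
  have hw10 : w₁ ⬝ᵥ w₀ = 0 := by rw [dotProduct_comm]; exact hw01
  have hAw₀ : A *ᵥ w₀ = hA.eigenvalues i₀ • w₀ := hA.mulVec_eigenvectorBasis i₀
  have hAw₁ : A *ᵥ w₁ = hA.eigenvalues i₁ • w₁ := hA.mulVec_eigenvectorBasis i₁
  set s : ℝ := u ⬝ᵥ w₀ with hs
  set t : ℝ := u ⬝ᵥ w₁ with ht
  by_cases hcase : s = 0 ∧ t = 0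
  · refine ⟨w₀, ?_, hcase.1, ?_⟩
    · intro h; rw [h] at hw00; simp at hw00
    · rw [hAw₀, dotProduct_smul, smul_eq_mul, hw00]
      simpa using h0
  · refine ⟨(-t) • w₀ + s • w₁, ?_, ?_, ?_⟩
    · intro h
      have e0 : w₀ ⬝ᵥ ((-t) • w₀ + s • w₁) = -t := by
        rw [dotProduct_add, dotProduct_smul, dotProduct_smul, hw00, hw01]; simp
      have e1 : w₁ ⬝ᵥ ((-t) • w₀ + s • w₁) = s := by
        rw [dotProduct_add, dotProduct_smul, dotProduct_smul, hw10, hw11]; simp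
      rw [h, dotProduct_zero] at e0 e1
      exact hcase ⟨e1.symm, by linarith⟩
    · rw [dotProduct_add, dotProduct_smul, dotProduct_smul, ← hs, ← ht]
      simp; ring
    · have hv2 : ((-t) • w₀ + s • w₁) ⬝ᵥ ((-t) • w₀ + s • w₁) = t^2 + s^2 := by
        simp only [dotProduct_add, add_dotProduct, dotProduct_smul, smul_dotProduct,
          hw00, hw01, hw10, hw11, smul_eq_mul]
        ring
      have hq : ((-t) • w₀ + s • w₁) ⬝ᵥ (A *ᵥ ((-t) • w₀ + s • w₁))
          = t^2 * hA.eigenvalues i₀ + s^2 * hA.eigenvalues i₁ := by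
        rw [Matrix.mulVec_add, Matrix.mulVec_smul, Matrix.mulVec_smul, hAw₀, hAw₁]
        simp only [dotProduct_add, add_dotProduct, dotProduct_smul, smul_dotProduct,
          hw00, hw01, hw10, hw11, smul_eq_mul]
        ring
      rw [hv2, hq]
      nlinarith [sq_nonneg s, sq_nonneg t]

/-- In the k-to-k setup with `n ≥ 2` and `p > 0`, if
`kp > min(λ₂(Q₁), λ₂(Q₂))`, then `λ₂(Q) < 2kp`: above `p* = min(λ₂(Q₁), λ₂(Q₂))/k` the
eigenvalue `2kp` is no longer the algebraic connectivity of `Q`. -/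
theorem stmt_5
    (n k : ℕ) (p : ℝ) (hn : 2 ≤ n) (hk : 1 ≤ k) (hkn : k ≤ n) (hp : 0 < p)
    (Q₁ Q₂ B : Matrix (Fin n) (Fin n) ℝ)
    (hQ₁ : Q₁.PosSemidef) (hQ₂ : Q₂.PosSemidef)
    (hQ₁u : Q₁ *ᵥ (fun _ => (1:ℝ)) = 0) (hQ₂u : Q₂ *ᵥ (fun _ => (1:ℝ)) = 0)
    (hB0 : ∀ i j, 0 ≤ B i j)
    (hBrow : ∀ i, ∑ j, B i j = (k:ℝ) * p) (hBcol : ∀ j, ∑ i, B i j = (k:ℝ) * p)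
    (Q : Matrix (Fin n ⊕ Fin n) (Fin n ⊕ Fin n) ℝ)
    (hQdef : Q = Matrix.fromBlocks (Q₁ + ((k:ℝ) * p) • 1) (-B)
      (-Bᵀ) (Q₂ + ((k:ℝ) * p) • 1))
    (hQH : Q.IsHermitian)
    (hgt : min ((sortedEigs hQ₁.isHermitian)[1]!) ((sortedEigs hQ₂.isHermitian)[1]!)
      < (k:ℝ) * p) :
    (sortedEigs hQH)[1]! < 2 * (k:ℝ) * p := by
  have hkp : 0 < (k:ℝ) * p := by
    have : (1:ℝ) ≤ (k:ℝ) := by exact_mod_cast hk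
    nlinarith
  set u : Fin n → ℝ := fun _ => 1 with hu
  have huu : (fun _ : Fin n ⊕ Fin n => (1:ℝ)) = Sum.elim u u := by
    funext s; cases s <;> rfl
  have hBu : B *ᵥ u = fun _ => (k:ℝ) * p := by
    funext i; simp [Matrix.mulVec, dotProduct, hu, hBrow i]
  have hBtu : Bᵀ *ᵥ u = fun _ => (k:ℝ) * p := by
    funext j; simp [Matrix.mulVec, dotProduct, hu, Matrix.transpose_apply, hBcol j]
  -- kernel vector
  have hK : Q *ᵥ (Sum.elim u u) = 0 := by
    rw [hQdef, Matrix.fromBlocks_mulVec]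
    simp only [Sum.elim_comp_inl, Sum.elim_comp_inr]
    simp only [Matrix.add_mulVec, Matrix.smul_mulVec, Matrix.one_mulVec, hQ₁u, hQ₂u,
      Matrix.neg_mulVec, hBu, hBtu]
    funext s
    cases s <;> simp [hu]
  have huune : (Sum.elim u u : Fin n ⊕ Fin n → ℝ) ≠ 0 := by
    intro h
    have := congrFun h (Sum.inl ⟨0, by omega⟩)
    simp [hu] at this
  have h2n : 2 ≤ Fintype.card (Fin n) := by simpa using hn
  rcases min_lt_iff.1 hgt with hcase | hcase
  · -- Q₁ side
    obtain ⟨v, hvne, hvu, hvq⟩ := existsV hQ₁.isHermitian h2n u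
    have hvv : 0 < v ⬝ᵥ v :=
      lt_of_le_of_ne (dot_self_nonneg v) (fun h => hvne (dotProduct_self_eq_zero.1 h.symm))
    have hx2 : Q *ᵥ (Sum.elim v 0) = Sum.elim (Q₁ *ᵥ v + ((k:ℝ)*p) • v) (-(Bᵀ *ᵥ v)) := by
      rw [hQdef, Matrix.fromBlocks_mulVec]
      simp only [Sum.elim_comp_inl, Sum.elim_comp_inr, Matrix.mulVec_zero, add_zero]
      simp only [Matrix.add_mulVec, Matrix.smul_mulVec, Matrix.one_mulVec,
        Matrix.neg_mulVec]
    have hray : (Sum.elim v 0) ⬝ᵥ (Q *ᵥ (Sum.elim v 0))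
        < (2 * (k:ℝ) * p) * ((Sum.elim v 0) ⬝ᵥ (Sum.elim v (0 : Fin n → ℝ))) := by
      rw [hx2, sumElim_dotProduct_sumElim, sumElim_dotProduct_sumElim]
      simp only [zero_dotProduct, dotProduct_zero, add_zero]
      rw [dotProduct_add, dotProduct_smul, smul_eq_mul]
      have := hcase
      nlinarith [hvq, hvv]
    refine core (x₂ := Sum.elim v 0) hQH huune hK ?_ (by nlinarith) ?_
    · rw [sumElim_dotProduct_sumElim, hvu, dotProduct_zero, add_zero]
    · exact hray
  · -- Q₂ side
    obtain ⟨v, hvne, hvu, hvq⟩ := existsV hQ₂.isHermitian h2n u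
    have hvv : 0 < v ⬝ᵥ v :=
      lt_of_le_of_ne (dot_self_nonneg v) (fun h => hvne (dotProduct_self_eq_zero.1 h.symm))
    have hx2 : Q *ᵥ (Sum.elim 0 v) = Sum.elim (-(B *ᵥ v)) (Q₂ *ᵥ v + ((k:ℝ)*p) • v) := by
      rw [hQdef, Matrix.fromBlocks_mulVec]
      simp only [Sum.elim_comp_inl, Sum.elim_comp_inr, Matrix.mulVec_zero, zero_add]
      simp only [Matrix.add_mulVec, Matrix.smul_mulVec, Matrix.one_mulVec,
        Matrix.neg_mulVec]
    have hray : (Sum.elim 0 v) ⬝ᵥ (Q *ᵥ (Sum.elim 0 v))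
        < (2 * (k:ℝ) * p) * ((Sum.elim (0 : Fin n → ℝ) v) ⬝ᵥ (Sum.elim (0 : Fin n → ℝ) v)) := by
      rw [hx2, sumElim_dotProduct_sumElim, sumElim_dotProduct_sumElim]
      simp only [zero_dotProduct, dotProduct_zero, zero_add]
      rw [dotProduct_add, dotProduct_smul, smul_eq_mul]
      have := hcase
      nlinarith [hvq, hvv]
    refine core (x₂ := Sum.elim 0 v) hQH huune hK ?_ (by nlinarith) ?_
    · rw [sumElim_dotProduct_sumElim, hvu, dotProduct_zero, zero_add]
    · exact hray
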